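/- Let G be a 2-coloring of the edges of the complete graph on n ≥ 6 vertices, and define A(G) as the average size of a monochromatic clique of G (averaged over all monochromatic cliques, of all sizes, including those of size 0 and 1) and M(G) as the maximum size of a monochromatic clique. Then M(G) − A(G) ≥ 1/2. -/

import Mathlib

/-!
Call a pair `(S, b)` a monochromatic clique when all edges inside `S` have colour `b`, and let
`M` bound the size of every monochromatic clique. Double count the pairs (`M`-clique,
`(M-1)`-subclique of the same colour): every `M`-clique has `M` such subcliques, while the
vertices extending an `(M-1)`-clique `T` of colour `b` pairwise span edges of colour `!b`
(otherwise `T` would extend to a clique of size `M + 1`), so there are at most `M` of them.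
Hence there are no more cliques of size `M` than of size `M - 1`, and since all sizes are at
most `M`, the average size is at most `M - 1/2`.
-/

open Finset

section MonoClique

variable {α : Type*} {c : α → α → Bool} {S T : Finset α} {b : Bool}

def IsMonoClique (c : α → α → Bool) (S : Finset α) (b : Bool) : Prop :=
  ∀ i ∈ S, ∀ j ∈ S, i ≠ j → c i j = b

instance [DecidableEq α] (c : α → α → Bool) (S : Finset α) (b : Bool) :
    Decidable (IsMonoClique c S b) :=
  inferInstanceAs (Decidable (∀ i ∈ S, ∀ j ∈ S, i ≠ j → c i j = b))

theorem IsMonoClique.subset (h : IsMonoClique c S b) (hTS : T ⊆ S) : IsMonoClique c T b :=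
  fun i hi j hj => h i (hTS hi) j (hTS hj)

theorem isMonoClique_insert [DecidableEq α] (hsym : ∀ i j, c i j = c j i) {x : α} :
    IsMonoClique c (insert x S) b ↔ IsMonoClique c S b ∧ ∀ y ∈ S, x ≠ y → c x y = b := by
  refine ⟨fun h => ⟨h.subset (subset_insert x S),
    fun y hy => h x (mem_insert_self x S) y (mem_insert_of_mem hy)⟩, ?_⟩
  rintro ⟨hS, hx⟩ i hi j hj hij
  rcases mem_insert.1 hi with rfl | hi' <;> rcases mem_insert.1 hj with rfl | hj'
  · exact absurd rfl hij
  · exact hx j hj' hij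
  · rw [hsym]; exact hx i hi' hij.symm
  · exact hS i hi' j hj' hij

def monoExtensions [Fintype α] [DecidableEq α] (c : α → α → Bool) (T : Finset α) (b : Bool) :
    Finset α :=
  {x | x ∉ T ∧ IsMonoClique c (insert x T) b}

theorem isMonoClique_monoExtensions [Fintype α] [DecidableEq α] (hsym : ∀ i j, c i j = c j i)
    (hmax : ∀ S b, IsMonoClique c S b → #S ≤ #T + 1) :
    IsMonoClique c (monoExtensions c T b) (!b) := by
  intro x hx y hy hxy
  simp only [monoExtensions, mem_filter, mem_univ, true_and] at hx hy
  by_contra hne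
  have hcxy : c x y = b := by simpa using hne
  have hclique : IsMonoClique c (insert x (insert y T)) b := by
    refine (isMonoClique_insert hsym).2 ⟨hy.2, fun z hz hxz => ?_⟩
    rcases mem_insert.1 hz with rfl | hzT
    · exact hcxy
    · exact ((isMonoClique_insert hsym).1 hx.2).2 z hzT hxz
  have hcard : #(insert x (insert y T)) = #T + 2 := by
    rw [card_insert_of_notMem (by simp [hxy, hx.1]), card_insert_of_notMem hy.1]
  have := hmax _ _ hclique
  omega

end MonoClique

section Counting

variable {α : Type*} [Fintype α] [DecidableEq α] {c : α → α → Bool}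

def monoCliques (c : α → α → Bool) : Finset (Finset α × Bool) :=
  {P | IsMonoClique c P.1 P.2}

@[simp]
theorem mem_monoCliques {P : Finset α × Bool} : P ∈ monoCliques c ↔ IsMonoClique c P.1 P.2 := by
  simp [monoCliques]

def IsSubclique (P Q : Finset α × Bool) : Prop := Q.1 ⊆ P.1 ∧ Q.2 = P.2

instance : DecidableRel (IsSubclique (α := α)) := fun _ _ =>
  inferInstanceAs (Decidable (_ ∧ _))

theorem card_le_card_subcliques {k : ℕ} {P : Finset α × Bool} (hP : IsMonoClique c P.1 P.2)
    (hcard : #P.1 = k + 1) :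
    k + 1 ≤ #({Q ∈ monoCliques c | #Q.1 = k}.bipartiteAbove IsSubclique P) := by
  rw [← hcard, ← card_image_of_injOn (f := fun v => (P.1.erase v, P.2))
    (fun v hv w hw h => P.1.erase_injOn hv hw (congrArg Prod.fst h))]
  refine card_le_card fun Q hQ => ?_
  obtain ⟨v, hv, rfl⟩ := mem_image.1 hQ
  simp only [mem_bipartiteAbove, mem_filter, mem_monoCliques, IsSubclique]
  exact ⟨⟨hP.subset (erase_subset v P.1), by rw [card_erase_of_mem hv, hcard]; rfl⟩,
    erase_subset v P.1, trivial⟩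

theorem card_supercliques_le (hsym : ∀ i j, c i j = c j i) {k : ℕ}
    (hmax : ∀ S b, IsMonoClique c S b → #S ≤ k + 1) {Q : Finset α × Bool} (hcard : #Q.1 = k) :
    #({P ∈ monoCliques c | #P.1 = k + 1}.bipartiteBelow IsSubclique Q) ≤ k + 1 := by
  have hsub : {P ∈ monoCliques c | #P.1 = k + 1}.bipartiteBelow IsSubclique Q ⊆
      (monoExtensions c Q.1 Q.2).image fun x => (insert x Q.1, Q.2) := by
    intro P hP
    simp only [mem_bipartiteBelow, mem_filter, mem_monoCliques, IsSubclique] at hP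
    obtain ⟨⟨hmono, hPcard⟩, hQP, hcol⟩ := hP
    obtain ⟨x, hxQ, hx⟩ := exists_eq_insert_iff.2 ⟨hQP, by rw [hcard, hPcard]⟩
    refine mem_image.2 ⟨x, ?_, Prod.ext hx hcol⟩
    simp only [monoExtensions, mem_filter, mem_univ, true_and]
    exact ⟨hxQ, by rw [hx, hcol]; exact hmono⟩
  calc _ ≤ #(monoExtensions c Q.1 Q.2) := (card_le_card hsub).trans card_image_le
    _ ≤ k + 1 := hmax _ _ (isMonoClique_monoExtensions hsym (hcard ▸ hmax))

theorem card_monoCliques_top_le (hsym : ∀ i j, c i j = c j i) {k : ℕ}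
    (hmax : ∀ S b, IsMonoClique c S b → #S ≤ k + 1) :
    #{P ∈ monoCliques c | #P.1 = k + 1} ≤ #{P ∈ monoCliques c | #P.1 = k} := by
  refine Nat.le_of_mul_le_mul_right (card_mul_le_card_mul IsSubclique ?_ ?_) k.succ_pos
  · intro P hP
    simp only [mem_filter, mem_monoCliques] at hP
    exact card_le_card_subcliques hP.1 hP.2
  · intro Q hQ
    exact card_supercliques_le hsym hmax (mem_filter.1 hQ).2

end Counting

theorem sum_div_card_le_sub_half {ι : Type*} {s : Finset ι} (hs : s.Nonempty) {f : ι → ℕ}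
    {M : ℕ} (hf : ∀ i ∈ s, f i ≤ M) (htop : #{i ∈ s | f i = M} ≤ #{i ∈ s | f i ≠ M}) :
    (∑ i ∈ s, (f i : ℝ)) / #s ≤ M - 1 / 2 := by
  have hpt : ∀ i ∈ s, (f i : ℝ) ≤ (M - 1) + if f i = M then 1 else 0 := by
    intro i hi
    split_ifs with h
    · simp [h]
    · have : f i + 1 ≤ M := by have := hf i hi; omega
      have : (f i : ℝ) + 1 ≤ M := by exact_mod_cast this
      linarith
  have hsum : ∑ i ∈ s, (f i : ℝ) ≤ #s * (M - 1) + #{i ∈ s | f i = M} := by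
    calc _ ≤ ∑ i ∈ s, ((M - 1 : ℝ) + if f i = M then 1 else 0) := sum_le_sum hpt
      _ = _ := by rw [sum_add_distrib, sum_const, sum_boole, nsmul_eq_mul]
  have hsplit : (#{i ∈ s | f i = M} : ℝ) + #{i ∈ s | f i ≠ M} = #s := by
    exact_mod_cast card_filter_add_card_filter_not (s := s) (fun i => f i = M)
  have htop' : (#{i ∈ s | f i = M} : ℝ) ≤ #{i ∈ s | f i ≠ M} := by exact_mod_cast htop
  rw [div_le_iff₀ (by exact_mod_cast hs.card_pos)]
  linarith

theorem stmt_15_general (n : ℕ) (hn : 6 ≤ n)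
    (c : Fin n → Fin n → Bool) (hsym : ∀ i j, c i j = c j i)
    (M : ℕ)
    (hMub : ∀ (S : Finset (Fin n)) (b : Bool),
      (∀ i ∈ S, ∀ j ∈ S, i ≠ j → c i j = b) → S.card ≤ M) :
    (M : ℝ) -
      (∑ P ∈ Finset.univ.filter (fun P : Finset (Fin n) × Bool =>
          ∀ i ∈ P.1, ∀ j ∈ P.1, i ≠ j → c i j = P.2), (P.1.card : ℝ)) /
      ((Finset.univ.filter (fun P : Finset (Fin n) × Bool =>
          ∀ i ∈ P.1, ∀ j ∈ P.1, i ≠ j → c i j = P.2)).card : ℝ)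
      ≥ 1 / 2 := by
  have hcliques : Finset.univ.filter (fun P : Finset (Fin n) × Bool =>
      ∀ i ∈ P.1, ∀ j ∈ P.1, i ≠ j → c i j = P.2) = monoCliques c := by
    ext; simp [IsMonoClique]
  rw [hcliques]
  have hM : 1 ≤ M := hMub {⟨0, by omega⟩} true (by simp)
  obtain ⟨k, rfl⟩ := Nat.exists_eq_add_of_le' hM
  have htop : #{P ∈ monoCliques c | #P.1 = k + 1} ≤ #{P ∈ monoCliques c | #P.1 ≠ k + 1} :=
    (card_monoCliques_top_le hsym hMub).trans (card_le_card (monotone_filter_right _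
      fun _ _ h => by omega))
  have havg := sum_div_card_le_sub_half ⟨(∅, true), by simp [IsMonoClique]⟩
    (fun P hP => hMub P.1 P.2 (mem_monoCliques.1 hP)) htop
  linarith

theorem stmt_15 (n : ℕ) (hn : 6 ≤ n)
    (c : Fin n → Fin n → Bool) (hsym : ∀ i j, c i j = c j i)
    (M : ℕ)
    (hMmax : ∃ (S : Finset (Fin n)) (b : Bool),
      S.card = M ∧ ∀ i ∈ S, ∀ j ∈ S, i ≠ j → c i j = b)
    (hMub : ∀ (S : Finset (Fin n)) (b : Bool),
      (∀ i ∈ S, ∀ j ∈ S, i ≠ j → c i j = b) → S.card ≤ M) :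
    (M : ℝ) -
      (∑ P ∈ Finset.univ.filter (fun P : Finset (Fin n) × Bool =>
          ∀ i ∈ P.1, ∀ j ∈ P.1, i ≠ j → c i j = P.2), (P.1.card : ℝ)) /
      ((Finset.univ.filter (fun P : Finset (Fin n) × Bool =>
          ∀ i ∈ P.1, ∀ j ∈ P.1, i ≠ j → c i j = P.2)).card : ℝ)
      ≥ 1 / 2 :=
  stmt_15_general n hn c hsym M hMub
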